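/- Let t > 0 and let μ be a finite positive Borel measure on ℝ³ supported in the sphere {r ∈ ℝ³ : |r| = t} with total mass μ(ℝ³) = t (e.g. μ = (4πt)^{−1} times the surface measure of the sphere of radius t, which is the convolution kernel of the three-dimensional wave propagator sin(2π|D|t)/(2π|D|)). Define T f(x) = ∫_{ℝ³} f(x − r) dμ(r) and let g(y) = 2^{3/4} e^{−π|y|²} be the L²-normalized Gaussian on ℝ³. Then for all z = (x, ξ) and w = (y, η) in ℝ⁶: |⟨T π(z)g, π(w)g⟩_{L²(ℝ³)}| ≤ t · exp(−(π/2)(|x − y| − t)²) · exp(−(π/2)|ξ − η|²). In particular, the Gabor matrix decays rapidly inside the lacuna {|x − y| < t} of the wave propagator. -/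

import Mathlib

open MeasureTheory Complex
open scoped Real

noncomputable section

/-- Time–frequency shift on `ℝ³`: `π(z)f(y) = e^{2πi z₂·y} f(y − z₁)`. -/
def tfShift3 (z : EuclideanSpace ℝ (Fin 3) × EuclideanSpace ℝ (Fin 3))
    (f : EuclideanSpace ℝ (Fin 3) → ℂ) (y : EuclideanSpace ℝ (Fin 3)) : ℂ :=
  Complex.exp ((2 * π * (inner ℝ z.2 y : ℝ)) * Complex.I) * f (y - z.1)

/-- The `L²`-normalized Gaussian on `ℝ³`: `g(y) = 2^{3/4} e^{−π|y|²}`. -/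
def gaussWin3 (y : EuclideanSpace ℝ (Fin 3)) : ℂ :=
  (((2 : ℝ) ^ ((3 : ℝ) / 4) * Real.exp (-π * ‖y‖ ^ 2) : ℝ) : ℂ)


/-! With `z = (x, ξ)` and `w = (y, η)`, Fubini puts the `μ`-integral outside. For fixed `r`,
`π(z)g(· - r)` is the wave packet `π(x + r, ξ)g` up to a unimodular factor, and the product of two
Gaussian wave packets is a Gaussian centred at the midpoint of their positions (Apollonius), whose
integral has modulus `exp(-(π/2)|x + r - y|²) exp(-(π/2)|ξ - η|²)`. On the sphere `|r| = t` the
reverse triangle inequality gives `|x + r - y| ≥ ||x - y| - t|`, and integrating the bound against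
`μ` contributes the total mass `t`. -/

open scoped RealInnerProductSpace

theorem norm_integral_cexp_gaussian_product {V : Type*} [NormedAddCommGroup V]
    [InnerProductSpace ℝ V] [FiniteDimensional ℝ V] [MeasurableSpace V] [BorelSpace V]
    (a b ξ : V) :
    ‖∫ y, cexp (-π * ‖y - a‖ ^ 2 - π * ‖y - b‖ ^ 2 + 2 * π * I * ⟪ξ, y⟫)‖ =
      (2 : ℝ)⁻¹ ^ ((Module.finrank ℝ V : ℝ) / 2) * Real.exp (-(π / 2) * ‖a - b‖ ^ 2) *
        Real.exp (-(π / 2) * ‖ξ‖ ^ 2) := by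
  set m := midpoint ℝ a b with hm
  have hexponent : ∀ u : V,
      -π * ‖u + m - a‖ ^ 2 - π * ‖u + m - b‖ ^ 2 + 2 * π * I * ⟪ξ, u + m⟫ =
        (-(2 * π) * ‖u‖ ^ 2 + 2 * π * I * ⟪ξ, u⟫) +
          (((-(π / 2) * ‖a - b‖ ^ 2 : ℝ) : ℂ) + ((2 * π * ⟪ξ, m⟫ : ℝ) : ℂ) * I) := by
    intro u
    have hapollonius :=
      EuclideanGeometry.dist_sq_add_dist_sq_eq_two_mul_dist_midpoint_sq_add_half_dist_sq (u + m) a b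
    simp only [dist_eq_norm, ← hm, add_sub_cancel_right] at hapollonius
    rw [inner_add_right]
    apply_fun ((↑) : ℝ → ℂ) at hapollonius
    push_cast at hapollonius ⊢
    linear_combination (-(π : ℂ)) * hapollonius
  have hb : 0 < (2 * π : ℂ).re := by simp [Real.pi_pos]
  rw [← integral_add_right_eq_self _ m]
  simp only [hexponent, Complex.exp_add (_ + _)]
  rw [integral_mul_const, GaussianFourier.integral_cexp_neg_mul_sq_norm_add hb]
  have hhalf : (π : ℂ) / (2 * π) = ((2⁻¹ : ℝ) : ℂ) := by
    push_cast
    field_simp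
  have hdecay : (2 * π * I) ^ 2 * ‖ξ‖ ^ 2 / (4 * (2 * π)) = ((-(π / 2) * ‖ξ‖ ^ 2 : ℝ) : ℂ) := by
    rw [mul_pow, I_sq]
    push_cast
    field_simp
    ring
  rw [hhalf, hdecay, Complex.exp_add, norm_mul, norm_mul, norm_mul, norm_exp_ofReal_mul_I,
    Complex.norm_exp_ofReal, Complex.norm_exp_ofReal, norm_cpow_eq_rpow_re_of_pos (by norm_num)]
  have hdim : ((Module.finrank ℝ V : ℂ) / 2).re = (Module.finrank ℝ V : ℝ) / 2 := by simp
  rw [hdim]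
  ring

theorem integral_integral_comp_sub_mul_swap {G 𝕜 : Type*} [NormedAddCommGroup G]
    [MeasurableSpace G] [BorelSpace G] [SecondCountableTopology G] [RCLike 𝕜]
    {ν μ : Measure G} [SFinite ν] [IsFiniteMeasure μ] {f h : G → 𝕜} (hf : Continuous f) {C : ℝ}
    (hfC : ∀ x, ‖f x‖ ≤ C) (hh : Integrable h ν) :
    ∫ y, (∫ r, f (y - r) ∂μ) * h y ∂ν = ∫ r, ∫ y, f (y - r) * h y ∂ν ∂μ := by
  have hint : Integrable (Function.uncurry fun y r => f (y - r) * h y) (ν.prod μ) :=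
    (hh.comp_fst μ).bdd_mul (hf.comp continuous_sub).aestronglyMeasurable
      (ae_of_all _ fun _ => hfC _)
  simp_rw [← integral_mul_const]
  exact integral_integral_swap hint

theorem sq_norm_sub_norm_le_sq_norm_add {E : Type*} [SeminormedAddCommGroup E] (x r : E) :
    (‖x‖ - ‖r‖) ^ 2 ≤ ‖x + r‖ ^ 2 := by
  rw [← sq_abs, ← norm_neg r, ← sub_neg_eq_add]
  exact pow_le_pow_left₀ (abs_nonneg _) (abs_norm_sub_norm_le x (-r)) 2

local notation "ℝ³" => EuclideanSpace ℝ (Fin 3)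

theorem norm_tfShift3 (z : ℝ³ × ℝ³) (f : ℝ³ → ℂ) (y : ℝ³) :
    ‖tfShift3 z f y‖ = ‖f (y - z.1)‖ := by
  simp [tfShift3, norm_exp]

theorem continuous_tfShift3 (z : ℝ³ × ℝ³) {f : ℝ³ → ℂ} (hf : Continuous f) :
    Continuous (tfShift3 z f) := by
  unfold tfShift3
  fun_prop

theorem integrable_tfShift3 (z : ℝ³ × ℝ³) {f : ℝ³ → ℂ} (hf : Integrable f) :
    Integrable (tfShift3 z f) :=
  (hf.comp_sub_right z.1).bdd_mul (c := 1) (by fun_prop) <| ae_of_all _ fun y => by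
    simp [norm_exp]

theorem continuous_gaussWin3 : Continuous gaussWin3 := by
  unfold gaussWin3
  fun_prop

theorem norm_gaussWin3_le (y : ℝ³) : ‖gaussWin3 y‖ ≤ 2 ^ ((3 : ℝ) / 4) := by
  rw [gaussWin3, norm_real, Real.norm_of_nonneg (by positivity)]
  exact mul_le_of_le_one_right (by positivity) (Real.exp_le_one_iff.2 (by nlinarith [Real.pi_pos]))

theorem integrable_gaussWin3 : Integrable gaussWin3 := by
  have hb : 0 < (π : ℂ).re := by simpa using Real.pi_pos
  convert (GaussianFourier.integrable_cexp_neg_mul_sq_norm_add hb 0 (0 : ℝ³)).const_mul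
    (((2 : ℝ) ^ ((3 : ℝ) / 4) : ℝ) : ℂ) using 2 with y
  simp [gaussWin3, ofReal_exp]

theorem tfShift3_gaussWin3 (z : ℝ³ × ℝ³) (u : ℝ³) :
    tfShift3 z gaussWin3 u =
      (((2 : ℝ) ^ ((3 : ℝ) / 4) : ℝ) : ℂ) * cexp (-π * ‖u - z.1‖ ^ 2 + 2 * π * I * ⟪z.2, u⟫) := by
  rw [tfShift3, gaussWin3, ofReal_mul, ofReal_exp, mul_left_comm, ← exp_add]
  push_cast
  ring_nf

theorem tfShift3_gaussWin3_sub_mul_conj (z w : ℝ³ × ℝ³) (r y : ℝ³) :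
    tfShift3 z gaussWin3 (y - r) * starRingEnd ℂ (tfShift3 w gaussWin3 y) =
      (((2 : ℝ) ^ ((3 : ℝ) / 2) : ℝ) : ℂ) * cexp ((-(2 * π * ⟪z.2, r⟫) : ℝ) * I) *
        cexp (-π * ‖y - (z.1 + r)‖ ^ 2 - π * ‖y - w.1‖ ^ 2 + 2 * π * I * ⟪z.2 - w.2, y⟫) := by
  have hconst : (((2 : ℝ) ^ ((3 : ℝ) / 4) : ℝ) : ℂ) * (((2 : ℝ) ^ ((3 : ℝ) / 4) : ℝ) : ℂ) =
      (((2 : ℝ) ^ ((3 : ℝ) / 2) : ℝ) : ℂ) := by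
    rw [← ofReal_mul, ← Real.rpow_add two_pos]
    norm_num
  rw [tfShift3_gaussWin3, tfShift3_gaussWin3, map_mul, conj_ofReal, ← exp_conj,
    mul_mul_mul_comm, ← exp_add, hconst, mul_assoc _ (cexp _), ← exp_add, sub_sub, add_comm r]
  congr 2
  simp only [map_add, map_mul, map_pow, conj_ofReal, conj_I, map_neg, map_ofNat, inner_sub_left,
    inner_sub_right]
  push_cast
  ring

theorem norm_integral_tfShift3_gaussWin3_sub_mul_conj (z w : ℝ³ × ℝ³) (r : ℝ³) :
    ‖∫ y, tfShift3 z gaussWin3 (y - r) * starRingEnd ℂ (tfShift3 w gaussWin3 y)‖ =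
      Real.exp (-(π / 2) * ‖z.1 + r - w.1‖ ^ 2) * Real.exp (-(π / 2) * ‖z.2 - w.2‖ ^ 2) := by
  have hnormalized : (2 : ℝ) ^ ((3 : ℝ) / 2) * (2 : ℝ)⁻¹ ^ ((3 : ℝ) / 2) = 1 := by
    rw [← Real.mul_rpow (by norm_num) (by norm_num)]
    norm_num
  simp_rw [tfShift3_gaussWin3_sub_mul_conj, integral_const_mul, norm_mul,
    norm_integral_cexp_gaussian_product, norm_exp_ofReal_mul_I, norm_real,
    Real.norm_of_nonneg (by positivity : (0 : ℝ) ≤ 2 ^ ((3 : ℝ) / 2)), finrank_euclideanSpace_fin]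
  push_cast
  rw [mul_one, ← mul_assoc, ← mul_assoc, hnormalized, one_mul]

/-- **Gabor matrix bound for the three-dimensional wave propagator (lacunas).** Let
`μ` be a finite positive measure on `ℝ³` supported in the sphere `{|r| = t}` with total
mass `t` (e.g. the wave kernel `(4πt)^{−1} dσ_{∂B_t}`), and let
`Tf(x) = ∫ f(x − r) dμ(r)`. Then for all `z = (x,ξ)`, `w = (y,η) ∈ ℝ⁶`:
`|⟨Tπ(z)g, π(w)g⟩| ≤ t exp(−(π/2)(|x−y|−t)²) exp(−(π/2)|ξ−η|²)`; in particular, the Gabor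
matrix decays rapidly inside the lacuna `{|x−y| < t}`. -/
theorem gabor_matrix_wave_3d_lacuna
    (t : ℝ) (ht : 0 < t) (μ : Measure (EuclideanSpace ℝ (Fin 3))) [IsFiniteMeasure μ]
    (hsupp : μ {r : EuclideanSpace ℝ (Fin 3) | ‖r‖ ≠ t} = 0)
    (hmass : μ Set.univ = ENNReal.ofReal t)
    (z w : EuclideanSpace ℝ (Fin 3) × EuclideanSpace ℝ (Fin 3)) :
    ‖∫ y, (∫ r, tfShift3 z gaussWin3 (y - r) ∂μ) *
        (starRingEnd ℂ) (tfShift3 w gaussWin3 y)‖ ≤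
      t * Real.exp (-(π / 2) * (‖z.1 - w.1‖ - t) ^ 2) *
        Real.exp (-(π / 2) * ‖z.2 - w.2‖ ^ 2) := by
  have hsphere : ∀ᵐ r ∂μ, ‖r‖ = t := ae_iff.2 hsupp
  have hentry : ∀ᵐ r ∂μ,
      ‖∫ y, tfShift3 z gaussWin3 (y - r) * starRingEnd ℂ (tfShift3 w gaussWin3 y)‖ ≤
        Real.exp (-(π / 2) * (‖z.1 - w.1‖ - t) ^ 2) * Real.exp (-(π / 2) * ‖z.2 - w.2‖ ^ 2) := by
    filter_upwards [hsphere] with r hr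
    rw [norm_integral_tfShift3_gaussWin3_sub_mul_conj, add_sub_right_comm]
    gcongr ?_ * _
    rw [Real.exp_le_exp]
    have hreverse := sq_norm_sub_norm_le_sq_norm_add (z.1 - w.1) r
    rw [hr] at hreverse
    exact mul_le_mul_of_nonpos_left hreverse (by linarith [Real.pi_pos])
  have hconj : Integrable fun y => starRingEnd ℂ (tfShift3 w gaussWin3 y) :=
    RCLike.conjCLE.toContinuousLinearMap.integrable_comp
      (integrable_tfShift3 w integrable_gaussWin3)
  rw [integral_integral_comp_sub_mul_swap (continuous_tfShift3 z continuous_gaussWin3)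
    (fun u => (norm_tfShift3 z _ u).trans_le (norm_gaussWin3_le _)) hconj]
  calc _ ≤ ∫ r, ‖∫ y, tfShift3 z gaussWin3 (y - r) * starRingEnd ℂ (tfShift3 w gaussWin3 y)‖ ∂μ :=
        norm_integral_le_integral_norm _
    _ ≤ ∫ _, Real.exp (-(π / 2) * (‖z.1 - w.1‖ - t) ^ 2) *
          Real.exp (-(π / 2) * ‖z.2 - w.2‖ ^ 2) ∂μ :=
        integral_mono_of_nonneg (ae_of_all _ fun _ => norm_nonneg _) (integrable_const _) hentry
    _ = _ := by
        rw [integral_const, measureReal_def, hmass, ENNReal.toReal_ofReal ht.le, smul_eq_mul,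
          mul_assoc]
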